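/- arXiv:2509.14068 — 9 statements merged into one kernel-verified Lean document; each statement's English description precedes it below -/
import Mathlib

section
/- For every infinite set I there exists an independent family of subsets of I of cardinality 2^{|I|}. -/
universe u

/-- (Hausdorff) Over any infinite set `I` there is an independent family of subsets of `I`
of cardinality `2^{|I|}`: a family `B : J → Set I` such that for any finitely many distinct
indices, split into those taken positively and those taken as complements, the resulting
intersection is nonempty. -/
theorem exists_independent_family_of_sets (I : Type u) [Infinite I] :
    ∃ (J : Type u) (B : J → Set I),
      Cardinal.mk J = 2 ^ Cardinal.mk I ∧
      ∀ (s t : Finset J), Disjoint s t →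
        ((⋂ j ∈ s, B j) ∩ ⋂ j ∈ t, (B j)ᶜ).Nonempty := by
  classical
  have h1 : Cardinal.mk (Finset I × Finset (Finset I)) = Cardinal.mk I := by
    simp [Cardinal.mk_finset_of_infinite, Cardinal.mul_eq_self (Cardinal.aleph0_le_mk I)]
  obtain ⟨e⟩ := Cardinal.eq.mp h1.symm
  refine ⟨Set I, fun X => {i | ((e i).1.filter (· ∈ X)) ∈ (e i).2},
    by simp [Cardinal.mk_set], ?_⟩
  intro s t hst
  have sep : ∀ X Y : Set I, X ≠ Y → ∃ x, (x ∈ X ∧ x ∉ Y) ∨ (x ∈ Y ∧ x ∉ X) := by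
    intro X Y h
    by_contra hc
    push_neg at hc
    exact h (Set.ext fun x => by have := hc x; tauto)
  choose a ha using sep
  set F : Finset I := (s ∪ t).biUnion (fun X => (s ∪ t).biUnion
    (fun Y => if h : X ≠ Y then {a X Y h} else ∅)) with hF
  have key : ∀ X ∈ s ∪ t, ∀ Y ∈ s ∪ t, X ≠ Y →
      F.filter (· ∈ X) ≠ F.filter (· ∈ Y) := by
    intro X hX Y hY h
    have haF : a X Y h ∈ F := by
      rw [hF]
      simp only [Finset.mem_biUnion]
      exact ⟨X, hX, Y, hY, by rw [dif_pos h]; exact Finset.mem_singleton_self _⟩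
    intro heq
    rcases ha X Y h with ⟨h1, h2⟩ | ⟨h1, h2⟩
    · have : a X Y h ∈ F.filter (· ∈ X) := Finset.mem_filter.mpr ⟨haF, h1⟩
      rw [heq] at this
      exact h2 (Finset.mem_filter.mp this).2
    · have : a X Y h ∈ F.filter (· ∈ Y) := Finset.mem_filter.mpr ⟨haF, h1⟩
      rw [← heq] at this
      exact h2 (Finset.mem_filter.mp this).2
  refine ⟨e.symm (F, s.image (fun X => F.filter (· ∈ X))), ?_, ?_⟩
  · simp only [Set.mem_iInter, Set.mem_setOf_eq, Equiv.apply_symm_apply]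
    intro X hX
    exact Finset.mem_image.mpr ⟨X, hX, rfl⟩
  · simp only [Set.mem_iInter, Set.mem_compl_iff, Set.mem_setOf_eq, Equiv.apply_symm_apply]
    intro Y hY hmem
    obtain ⟨X, hX, hXY⟩ := Finset.mem_image.mp hmem
    have hne : X ≠ Y := fun h => (Finset.disjoint_left.mp hst hX) (h ▸ hY)
    exact key X (Finset.mem_union_left _ hX) Y (Finset.mem_union_right _ hY) hne hXY
end

section
/- (Engelking–Karłowicz) For any infinite cardinals λ ≥ κ ≥ ℵ₀ there exists a family F of functions from λ to κ with |F| = 2^λ which is independent, i.e., for every n < ω, all distinct g_0, …, g_{n−1} ∈ F, and all j_0, …, j_{n−1} < κ, the set { t ∈ λ : g_0(t) = j_0 ∧ ⋯ ∧ g_{n−1}(t) = j_{n−1} } is nonempty. -/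
universe u

/-- (Engelking–Karłowicz) For any infinite cardinals `λ ≥ κ ≥ ℵ₀` (here realized as types
`L` of cardinality `λ` and `K` of cardinality `κ`), there exists an independent family
`F ⊆ K^L` of functions of cardinality `2^λ`: for any finitely many distinct members
`g` of `F` and any prescribed values `j g ∈ K`, the set of `t ∈ L` where every such `g`
takes its prescribed value is nonempty. -/
theorem exists_independent_family_of_functions (L K : Type u) [Infinite K]
    (hKL : Cardinal.mk K ≤ Cardinal.mk L) :
    ∃ F : Set (L → K),
      Cardinal.mk F = 2 ^ Cardinal.mk L ∧
      ∀ (s : Finset (L → K)), ↑s ⊆ F → ∀ j : (L → K) → K,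
        { t : L | ∀ g ∈ s, g t = j g }.Nonempty := by
  classical
  have hK : Cardinal.aleph0 ≤ Cardinal.mk K := Cardinal.infinite_iff.mp inferInstance
  have hL : Cardinal.aleph0 ≤ Cardinal.mk L := hK.trans hKL
  haveI : Infinite L := Cardinal.infinite_iff.mpr hL
  haveI : Nonempty K := inferInstance
  -- The index type `T` has the same cardinality as `L`
  have hT : Cardinal.mk L = Cardinal.mk (Σ u : Finset L, {v // v ∈ u.powerset} → K) := by
    apply le_antisymm
    · exact Cardinal.mk_le_of_injective (f := fun t : L =>
        (⟨{t}, fun _ => Classical.arbitrary K⟩ : Σ u : Finset L, {v // v ∈ u.powerset} → K))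
        (by
          intro a b hab
          have : ({a} : Finset L) = {b} := congrArg Sigma.fst hab
          simpa using this)
    · rw [Cardinal.mk_sigma]
      calc (Cardinal.sum fun u : Finset L =>
              Cardinal.mk ({v // v ∈ u.powerset} → K))
          ≤ Cardinal.sum (fun _ : Finset L => Cardinal.mk K) := by
            apply Cardinal.sum_le_sum
            intro u
            rw [Cardinal.mk_arrow, Cardinal.lift_id, Cardinal.lift_id, Cardinal.mk_coe_finset]
            exact_mod_cast Cardinal.power_nat_le hK
        _ = Cardinal.mk (Finset L) * Cardinal.mk K := Cardinal.sum_const' _ _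
        _ = Cardinal.mk L * Cardinal.mk K := by rw [Cardinal.mk_finset_of_infinite]
        _ = Cardinal.mk L := by rw [Cardinal.mul_eq_max hL hK, max_eq_left hKL]
  obtain ⟨e⟩ := Cardinal.eq.mp hT
  -- evaluation of a coloring at an arbitrary finset (default value outside the powerset)
  set ap : (Σ u : Finset L, {v // v ∈ u.powerset} → K) → Finset L → K :=
    fun x v => if hv : v ∈ x.1.powerset then x.2 ⟨v, hv⟩ else Classical.arbitrary K with hap
  -- The independent family
  set G : Set L → (L → K) := fun A t => ap (e t) ((e t).1.filter (fun x => x ∈ A)) with hGdef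
  have hGsymm : ∀ (C : Set L) (x : Σ u : Finset L, {v // v ∈ u.powerset} → K),
      G C (e.symm x) = ap x (x.1.filter (fun z => z ∈ C)) := by
    intro C x
    simp only [hGdef, Equiv.apply_symm_apply]
  -- injectivity of `G`
  have hGinj : Function.Injective G := by
    intro A B hAB
    by_contra hne
    have : ∃ t₀, ¬ (t₀ ∈ A ↔ t₀ ∈ B) := by
      by_contra h'
      push_neg at h'
      exact hne (Set.ext fun t => (h' t))
    obtain ⟨t₀, ht₀⟩ := this
    obtain ⟨k₁, hk₁⟩ := exists_ne (Classical.arbitrary K)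
    set h : {v // v ∈ ({t₀} : Finset L).powerset} → K := fun v =>
      if v.1 = {t₀} then k₁ else Classical.arbitrary K with hh
    have key : ∀ C : Set L,
        G C (e.symm ⟨{t₀}, h⟩) = if t₀ ∈ C then k₁ else Classical.arbitrary K := by
      intro C
      rw [hGsymm]
      have hsub : ({t₀} : Finset L).filter (fun z => z ∈ C) ∈ ({t₀} : Finset L).powerset :=
        Finset.mem_powerset.mpr (Finset.filter_subset _ _)
      simp only [hap]
      rw [dif_pos hsub]
      simp only [hh]
      by_cases hC : t₀ ∈ C
      · simp [Finset.filter_singleton, hC]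
      · simp [Finset.filter_singleton, hC, (Finset.singleton_ne_empty t₀).symm]
    have hiff : (if t₀ ∈ A then k₁ else Classical.arbitrary K) =
        (if t₀ ∈ B then k₁ else Classical.arbitrary K) := by
      rw [← key A, ← key B, hAB]
    by_cases hA' : t₀ ∈ A <;> by_cases hB' : t₀ ∈ B
    · exact ht₀ (by tauto)
    · rw [if_pos hA', if_neg hB'] at hiff; exact hk₁ hiff
    · rw [if_neg hA', if_pos hB'] at hiff; exact hk₁ hiff.symm
    · exact ht₀ (by tauto)
  refine ⟨Set.range G, ?_, ?_⟩
  · rw [Cardinal.mk_range_eq _ hGinj, Cardinal.mk_set]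
  · intro s hs j
    -- choose preimages
    set A : (L → K) → Set L := fun g => if h : ∃ A, G A = g then h.choose else ∅ with hA
    have hGA : ∀ g ∈ s, G (A g) = g := by
      intro g hg
      have : ∃ B, G B = g := hs hg
      simp only [hA, dif_pos this]
      exact this.choose_spec
    have hAne : ∀ g ∈ s, ∀ g' ∈ s, g ≠ g' → A g ≠ A g' := by
      intro g hg g' hg' hne h
      exact hne ((hGA g hg).symm.trans (h ▸ hGA g' hg'))
    -- separating points
    set w : (L → K) → (L → K) → L := fun g g' =>
      if h : ∃ t, ¬ (t ∈ A g ↔ t ∈ A g') then h.choose else Classical.arbitrary L with hw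
    have hwsep : ∀ g ∈ s, ∀ g' ∈ s, g ≠ g' → ¬ (w g g' ∈ A g ↔ w g g' ∈ A g') := by
      intro g hg g' hg' hne
      have hANE := hAne g hg g' hg' hne
      have hex : ∃ t, ¬ (t ∈ A g ↔ t ∈ A g') := by
        by_contra h'
        push_neg at h'
        exact hANE (Set.ext fun t => h' t)
      simp only [hw, dif_pos hex]
      exact hex.choose_spec
    set u : Finset L := (s ×ˢ s).image (fun p => w p.1 p.2) with hu
    have hkey : ∀ g ∈ s, ∀ g' ∈ s, g ≠ g' →
        u.filter (fun x => x ∈ A g) ≠ u.filter (fun x => x ∈ A g') := by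
      intro g hg g' hg' hne h
      have hmem : w g g' ∈ u := by
        simp only [hu, Finset.mem_image]
        exact ⟨(g, g'), Finset.mem_product.mpr ⟨hg, hg'⟩, rfl⟩
      have := Finset.ext_iff.mp h (w g g')
      simp only [Finset.mem_filter, hmem, true_and] at this
      exact hwsep g hg g' hg' hne this
    -- the coloring
    set h : {v // v ∈ u.powerset} → K := fun v =>
      if H : ∃ g, g ∈ s ∧ v.1 = u.filter (fun x => x ∈ A g) then j H.choose
      else Classical.arbitrary K with hh
    refine ⟨e.symm ⟨u, h⟩, ?_⟩
    intro g hg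
    have hGt : g (e.symm ⟨u, h⟩) = G (A g) (e.symm ⟨u, h⟩) := by rw [hGA g hg]
    rw [hGt, hGsymm]
    have hsub : u.filter (fun z => z ∈ A g) ∈ u.powerset :=
      Finset.mem_powerset.mpr (Finset.filter_subset _ _)
    simp only [hap]
    rw [dif_pos hsub]
    have hex : ∃ g', g' ∈ s ∧ u.filter (fun z => z ∈ A g) = u.filter (fun x => x ∈ A g') :=
      ⟨g, hg, rfl⟩
    simp only [hh]
    rw [dif_pos hex]
    have hspec := hex.choose_spec
    have : hex.choose = g := by
      by_contra hne
      exact hkey g hg hex.choose hspec.1 (Ne.symm hne) hspec.2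
    rw [this]
end

section
/- Let M be an infinite set, let I be a set with |I| = λ infinite, and let D be a regular ultrafilter on I. Then the ultrapower M^I/D, i.e., the quotient of the set of functions I → M by the equivalence relation f ∼ g iff { t ∈ I : f(t) = g(t) } ∈ D, has cardinality |M|^{|I|}. -/
universe u

/-- If `M` is an infinite set, `I` is an infinite set of cardinality `λ`, and `D` is a
regular ultrafilter on `I` (witnessed by a regularizing family `X` indexed by a set of
cardinality `λ`, here `I` itself), then the ultrapower `M^I/D` — the quotient of the
functions `I → M` by agreement on a `D`-large set, i.e. the germs of functions `I → M`
along `D` — has cardinality `|M|^{|I|}`. -/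
theorem card_ultrapower_of_regular (I M : Type u) [Infinite I] [Infinite M]
    (D : Ultrafilter I) (X : I → Set I)
    (hX : ∀ a : I, X a ∈ D)
    (hreg : ∀ σ : Set I, σ.Infinite → ⋂ a ∈ σ, X a = ∅) :
    Cardinal.mk (Filter.Germ (↑D : Filter I) M) = Cardinal.mk M ^ Cardinal.mk I := by
  classical
  -- each t belongs to only finitely many X a
  have hσfin : ∀ t : I, {a : I | t ∈ X a}.Finite := by
    intro t
    by_contra h
    have h' : {a : I | t ∈ X a}.Infinite := h
    have hempty := hreg _ h'
    have ht : t ∈ ⋂ a ∈ {a : I | t ∈ X a}, X a := by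
      simp only [Set.mem_iInter]
      intro a ha; exact ha
    rw [hempty] at ht
    exact ht
  letI : LinearOrder I := linearOrderOfSTO WellOrderingRel
  obtain ⟨e⟩ : Nonempty (List M ≃ M) := Cardinal.eq.1 (Cardinal.mk_list_eq_mk M)
  set σ : I → Finset I := fun t => (hσfin t).toFinset with hσdef
  have hσ : ∀ {t a : I}, t ∈ X a ↔ a ∈ σ t := by
    intro t a; simp [hσdef, Set.Finite.mem_toFinset]
  let g : (I → M) → (I → M) := fun f t => e (((σ t).sort (· ≤ ·)).map f)
  have hinj : Function.Injective (fun f : I → M => (↑(g f) : Filter.Germ (↑D : Filter I) M)) := by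
    intro f f' h
    funext α
    by_contra hne
    rw [Filter.Germ.coe_eq] at h
    have hmem : {t | g f t = g f' t} ∩ X α ∈ (↑D : Filter I) :=
      Filter.inter_mem h (hX α)
    obtain ⟨t, ht1, ht2⟩ := Filter.nonempty_of_mem hmem
    have hlists : ((σ t).sort (· ≤ ·)).map f = ((σ t).sort (· ≤ ·)).map f' :=
      e.injective ht1
    have hα : α ∈ (σ t).sort (· ≤ ·) := (Finset.mem_sort _).2 (hσ.1 ht2)
    have : f α = f' α := by
      have := List.map_eq_map_iff.1 hlists α hα
      exact this
    exact hne this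
  apply le_antisymm
  · have hsurj : Function.Surjective
        (fun f : I → M => (↑f : Filter.Germ (↑D : Filter I) M)) := by
      intro x
      exact Quotient.inductionOn x (fun f => ⟨f, rfl⟩)
    calc Cardinal.mk (Filter.Germ (↑D : Filter I) M)
        ≤ Cardinal.mk (I → M) := Cardinal.mk_le_of_surjective hsurj
      _ = Cardinal.mk M ^ Cardinal.mk I := (Cardinal.power_def M I).symm
  · calc Cardinal.mk M ^ Cardinal.mk I = Cardinal.mk (I → M) := Cardinal.power_def M I
      _ ≤ Cardinal.mk (Filter.Germ (↑D : Filter I) M) := Cardinal.mk_le_of_injective hinj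
end

section
/- Let L be a countable first-order language, M an infinite L-structure, and D a regular ultrafilter on an infinite set I. Let N = M^I/D be the ultrapower. Then N is ℵ₁-saturated: for every countable set p = { φ_n(x, ā_n) : n < ω } of L-formulas with parameters ā_n from N such that every finite subset of p is realized by some element of N, there is an element of N realizing every formula of p simultaneously. -/
universe u v w

open FirstOrder

/-- Let `L` be a countable first-order language, `M` an infinite `L`-structure, and `D` a
regular ultrafilter on an infinite set `I` (regularity witnessed by a family indexed by a
set of cardinality `|I|`, here `I` itself).  Then the ultrapower `N = M^I/D` is
`ℵ₁`-saturated: every countable type `p = { φ_n(x, ā_n) : n < ω }` over `N` (each `φ_n` a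
formula whose parameter places are filled by a tuple `a n` from `N`), all of whose finite
subsets are realized in `N`, is realized in `N`. -/
theorem ultrapower_aleph_one_saturated
    (L : FirstOrder.Language.{v, w}) (hL : L.card ≤ Cardinal.aleph0)
    (M : Type w) [L.Structure M] [Infinite M]
    (I : Type u) [Infinite I] (D : Ultrafilter I)
    (X : I → Set I) (hX : ∀ a : I, X a ∈ D)
    (hreg : ∀ σ : Set I, σ.Infinite → ⋂ a ∈ σ, X a = ∅)
    (φ : ℕ → L.Formula (ℕ ⊕ Unit))
    (a : ℕ → ℕ → (↑D : Filter I).Product (fun _ : I => M))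
    (hfin : ∀ s : Finset ℕ, ∃ x : (↑D : Filter I).Product (fun _ : I => M),
      ∀ n ∈ s, (φ n).Realize (Sum.elim (a n) (fun _ => x))) :
    ∃ x : (↑D : Filter I).Product (fun _ : I => M),
      ∀ n : ℕ, (φ n).Realize (Sum.elim (a n) (fun _ => x)) := by
  classical
  have hrep : ∀ n k : ℕ, ∃ g : I → M,
      (↑g : (↑D : Filter I).Product (fun _ : I => M)) = a n k := fun n k =>
    Quotient.exists_rep (a n k)
  choose f hf using hrep
  -- Łoś-style key equivalence for each formula with a candidate witness
  have key : ∀ (k : ℕ) (y : I → M),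
      (φ k).Realize (Sum.elim (a k)
          (fun _ => (↑y : (↑D : Filter I).Product (fun _ : I => M)))) ↔
        ∀ᶠ i in (↑D : Filter I),
          (φ k).Realize (Sum.elim (fun j => f k j i) (fun _ => y i)) := by
    intro k y
    have h1 : (Sum.elim (a k)
        (fun _ => (↑y : (↑D : Filter I).Product (fun _ : I => M)))) =
        fun j : ℕ ⊕ Unit => (↑(Sum.elim (f k) (fun _ => y) j) :
          (↑D : Filter I).Product (fun _ : I => M)) := by
      funext j
      cases j with
      | inl j => exact (hf k j).symm
      | inr j => rfl
    rw [h1]; refine (Language.Ultraproduct.realize_formula_cast (φ k) (fun j => Sum.elim (f k) (fun _ => y) j)).trans ?_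
    apply Filter.eventually_congr
    filter_upwards with i
    have h2 : (fun j : ℕ ⊕ Unit => Sum.elim (f k) (fun _ => y) j i) =
        Sum.elim (fun j => f k j i) (fun _ => y i) := by
      funext j; cases j <;> rfl
    rw [h2]
  -- sets A n : where the first n+1 formulas have a common local witness
  set A : ℕ → Set I := fun n =>
    { i | ∃ m : M, ∀ k ≤ n, (φ k).Realize (Sum.elim (fun j => f k j i) (fun _ => m)) }
    with hA_def
  have hA : ∀ n, A n ∈ D := by
    intro n
    obtain ⟨x, hx⟩ := hfin (Finset.range (n + 1))
    obtain ⟨g, hg⟩ := Quotient.exists_rep x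
    have hg' : (↑g : (↑D : Filter I).Product (fun _ : I => M)) = x := hg
    have hk : ∀ k ≤ n, ∀ᶠ i in (↑D : Filter I),
        (φ k).Realize (Sum.elim (fun j => f k j i) (fun _ => g i)) := by
      intro k hkn
      exact (key k g).1 (by rw [hg']; exact hx k (Finset.mem_range.2 (Nat.lt_succ_of_le hkn)))
    have hall : ∀ᶠ i in (↑D : Filter I), ∀ k ∈ Finset.range (n + 1),
        (φ k).Realize (Sum.elim (fun j => f k j i) (fun _ => g i)) :=
      (Filter.eventually_all_finset _).2 fun k hkn =>
        hk k (Nat.lt_succ_iff.1 (Finset.mem_range.1 hkn))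
    exact Filter.mem_of_superset hall fun i hi =>
      ⟨g i, fun k hkn => hi k (Finset.mem_range.2 (Nat.lt_succ_of_le hkn))⟩
  -- embed ℕ into I and use regularity
  let e : ℕ ↪ I := Infinite.natEmbedding I
  set B : ℕ → Set I := fun n => A n ∩ ⋂ k ∈ Finset.range (n + 1), X (e k) with hB_def
  have hB : ∀ n, B n ∈ D := by
    intro n
    exact Filter.inter_mem (hA n)
      ((Filter.biInter_finset_mem _).2 fun k _ => hX (e k))
  -- each i lies in only finitely many B n
  have hSfin : ∀ i : I, { n : ℕ | i ∈ B n }.Finite := by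
    intro i
    have hsub : { n : ℕ | i ∈ B n } ⊆ { n : ℕ | i ∈ X (e n) } := by
      intro n hn
      have := hn.2
      simp only [Set.mem_iInter] at this
      exact this n (Finset.mem_range.2 (Nat.lt_succ_self n))
    refine Set.Finite.subset ?_ hsub
    by_contra hinf
    have hinf' : { n : ℕ | i ∈ X (e n) }.Infinite := hinf
    have hσ : (e '' { n : ℕ | i ∈ X (e n) }).Infinite :=
      Set.Infinite.image (e.injective.injOn) hinf'
    have := hreg _ hσ
    have hi : i ∈ ⋂ b ∈ e '' { n : ℕ | i ∈ X (e n) }, X b := by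
      simp only [Set.mem_iInter]
      rintro b ⟨n, hn, rfl⟩
      exact hn
    rw [this] at hi
    exact hi
  -- choose a global witness function
  have hw : ∀ i : I, ∃ m : M, ∀ n : ℕ, i ∈ B n →
      (φ n).Realize (Sum.elim (fun j => f n j i) (fun _ => m)) := by
    intro i
    by_cases hne : { n : ℕ | i ∈ B n }.Nonempty
    · set t := (hSfin i).toFinset with ht_def
      have htne : t.Nonempty := by
        obtain ⟨n, hn⟩ := hne
        exact ⟨n, ((hSfin i).mem_toFinset).2 hn⟩
      set N0 := t.max' htne with hN0_def
      have hN0 : i ∈ B N0 := ((hSfin i).mem_toFinset).1 (t.max'_mem htne)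
      obtain ⟨m, hm⟩ := hN0.1
      refine ⟨m, fun n hn => ?_⟩
      have hle : n ≤ N0 := t.le_max' n (((hSfin i).mem_toFinset).2 hn)
      exact hm n hle
    · refine ⟨Classical.arbitrary M, fun n hn => ?_⟩
      exact absurd ⟨n, hn⟩ hne
  choose g hg using hw
  refine ⟨(↑g : (↑D : Filter I).Product (fun _ : I => M)), fun n => ?_⟩
  exact (key n g).2 (Filter.mem_of_superset (hB n) fun i hi => hg i n hi)
end

section
/- Every nonprincipal ultrafilter D on a countably infinite set I is good: every monotone function f from the finite subsets of ω to D has a multiplicative refinement in D. -/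
/-- Every nonprincipal ultrafilter `D` on a countably infinite set `I` is good: every
monotone function `f` from the finite subsets of `ω` to `D` (monotone meaning `u ⊆ v`
implies `f v ⊆ f u`) has a multiplicative refinement `g`, i.e. `g` takes values in `D`,
`g u ⊆ f u` for all `u`, and `g u ∩ g v = g (u ∪ v)` for all finite `u, v`. -/
theorem nonprincipal_ultrafilter_on_countable_is_good
    (I : Type*) [Countable I] [Infinite I] (D : Ultrafilter I)
    (hnp : ∀ s : Set I, s.Finite → s ∉ D)
    (f : Finset ℕ → Set I)
    (hfD : ∀ u, f u ∈ D)
    (hmono : ∀ u v : Finset ℕ, u ⊆ v → f v ⊆ f u) :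
    ∃ g : Finset ℕ → Set I,
      (∀ u, g u ∈ D) ∧ (∀ u, g u ⊆ f u) ∧
      ∀ u v : Finset ℕ, g u ∩ g v = g (u ∪ v) := by
  classical
  obtain ⟨e⟩ : Nonempty (I ≃ ℕ) := nonempty_equiv_of_countable
  -- F m is the intersection of f w over all w ⊆ range m
  set F : ℕ → Set I := fun m => ⋂ w ∈ (Finset.range m).powerset, f w with hF
  have hFD : ∀ m, F m ∈ D := by
    intro m
    exact Filter.biInter_finset_mem _ |>.mpr (fun w _ => hfD w)
  have hFmem : ∀ m (i : I), i ∈ F m ↔ ∀ w : Finset ℕ, w ⊆ Finset.range m → i ∈ f w := by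
    intro m i
    simp [hF, Set.mem_iInter₂]
  -- n i : the largest m ≤ e i such that i ∈ F m
  set n : I → ℕ := fun i => Nat.findGreatest (fun m => i ∈ F m) (e i) with hn
  set g : Finset ℕ → Set I :=
    fun u => {i | u ⊆ Finset.range (n i) ∧ i ∈ F (n i)} with hg
  refine ⟨g, ?_, ?_, ?_⟩
  · intro u
    set N : ℕ := u.sup id + 1 with hN
    have huN : u ⊆ Finset.range N := by
      intro k hk
      simp only [Finset.mem_range, hN]
      exact Nat.lt_succ_of_le (Finset.le_sup (f := id) hk)
    have h1 : {i : I | N ≤ e i} ∈ D := by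
      have hfin : ({i : I | e i < N} : Set I).Finite := by
        have : ({i : I | e i < N} : Set I) = e ⁻¹' (Set.Iio N) := rfl
        rw [this]
        exact (Set.finite_Iio N).preimage e.injective.injOn
      have := (Ultrafilter.compl_mem_iff_notMem (f := D)).mpr (hnp _ hfin)
      convert this using 1
      ext i
      simp [not_lt]
    have hsub : {i : I | N ≤ e i} ∩ F N ⊆ g u := by
      rintro i ⟨hiN, hiF⟩
      have hNle : N ≤ n i := Nat.le_findGreatest (P := fun m => i ∈ F m) hiN hiF
      have hiFn : i ∈ F (n i) := Nat.findGreatest_spec (P := fun m => i ∈ F m) hiN hiF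
      refine ⟨huN.trans ?_, hiFn⟩
      exact Finset.range_subset_range.mpr hNle
    exact Filter.mem_of_superset (Filter.inter_mem h1 (hFD N)) hsub
  · rintro u i ⟨h1, h2⟩
    exact (hFmem (n i) i).mp h2 u h1
  · intro u v
    ext i
    simp only [hg, Set.mem_inter_iff, Set.mem_setOf_eq, Finset.union_subset_iff]
    tauto
end

section
/- For any infinite cardinals λ ≥ κ ≥ ℵ₀ there exist a regular filter D₀ on λ and a family F of functions from λ to κ with |F| = 2^λ which is independent modulo D₀: for every n < ω, all distinct g_0, …, g_{n−1} ∈ F, and all j_0, …, j_{n−1} < κ, the set { t < λ : g_0(t) = j_0 ∧ ⋯ ∧ g_{n−1}(t) = j_{n−1} } is nonempty modulo D₀ (its complement does not belong to D₀). -/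
universe u

open Cardinal

section EK
variable (Λ K : Type u)

/-- Index type: pairs of a finite `s ⊆ Λ` and a function from subsets of `s` to `K`. -/
private def EKIdx : Type u := Σ s : Finset Λ, ({t : Finset Λ // t ⊆ s} → K)

private lemma EK_finite (s : Finset Λ) : Finite {t : Finset Λ // t ⊆ s} := by
  classical
  refine Finite.of_injective
    (fun t => (⟨t.1, Finset.mem_powerset.2 t.2⟩ : {x // x ∈ s.powerset})) ?_
  intro a b h
  simp only [Subtype.mk.injEq] at h
  exact Subtype.ext h

private lemma EK_mk_idx [Infinite Λ] [Infinite K]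
    (hKL : Cardinal.mk K ≤ Cardinal.mk Λ) : Cardinal.mk (EKIdx Λ K) = Cardinal.mk Λ := by
  classical
  have hinfΛ : ℵ₀ ≤ #Λ := Cardinal.aleph0_le_mk Λ
  have hinfK : ℵ₀ ≤ #K := Cardinal.aleph0_le_mk K
  apply le_antisymm
  · rw [EKIdx, Cardinal.mk_sigma]
    have hterm : ∀ s : Finset Λ, #({t : Finset Λ // t ⊆ s} → K) ≤ #Λ := by
      intro s
      have := EK_finite Λ s
      rw [← Cardinal.power_def]
      exact le_trans (Cardinal.pow_le hinfK (Cardinal.lt_aleph0_of_finite _)) hKL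
    calc (Cardinal.sum fun s : Finset Λ => #({t : Finset Λ // t ⊆ s} → K))
        ≤ Cardinal.sum (fun _ : Finset Λ => #Λ) := Cardinal.sum_le_sum _ _ hterm
      _ = #(Finset Λ) * #Λ := Cardinal.sum_const' _ _
      _ = #Λ * #Λ := by rw [Cardinal.mk_finset_of_infinite]
      _ = #Λ := Cardinal.mul_eq_self hinfΛ
  · have : Nonempty K := inferInstance
    refine Cardinal.mk_le_of_injective (f := fun a : Λ =>
      (⟨{a}, fun _ => Classical.arbitrary K⟩ : EKIdx Λ K)) ?_
    intro a b h
    have : ({a} : Finset Λ) = {b} := congrArg Sigma.fst h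
    simpa using this

end EK

/-- For any infinite cardinals `λ ≥ κ ≥ ℵ₀` (realized as infinite types `Λ`, `K` with
`|K| ≤ |Λ|`) there exist a (proper) regular filter `D₀` on `λ` and a family `F` of
functions from `λ` to `κ` with `|F| = 2^λ` independent modulo `D₀`: every finite pattern
of values, prescribed on finitely many distinct members of `F`, is realized on a set
which is nonempty modulo `D₀` (its complement does not belong to `D₀`). -/
theorem exists_regular_filter_with_independent_family
    (Λ K : Type u) [Infinite Λ] [Infinite K]
    (hKL : Cardinal.mk K ≤ Cardinal.mk Λ) :
    ∃ D₀ : Filter Λ, D₀.NeBot ∧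
      (∃ X : Λ → Set Λ, (∀ a : Λ, X a ∈ D₀) ∧
        ∀ σ : Set Λ, σ.Infinite → ⋂ a ∈ σ, X a = ∅) ∧
      ∃ F : Set (Λ → K),
        Cardinal.mk F = 2 ^ Cardinal.mk Λ ∧
        ∀ (s : Finset (Λ → K)), ↑s ⊆ F → ∀ j : (Λ → K) → K,
          { t : Λ | ∀ g ∈ s, g t = j g }ᶜ ∉ D₀ := by
  classical
  obtain ⟨e⟩ := Cardinal.eq.mp (EK_mk_idx Λ K hKL).symm
  -- the regularizing sets
  set X : Λ → Set Λ := fun a => {t : Λ | a ∈ (e t).1} with hX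
  set D₀ : Filter Λ := Filter.generate (Set.range X) with hD₀
  -- the independent family
  set f : Set Λ → Λ → K := fun A t =>
    (e t).2 ⟨(e t).1.filter (· ∈ A), Finset.filter_subset _ _⟩ with hf
  have key : ∀ (v : Finset Λ) (gg : {t : Finset Λ // t ⊆ v} → K) (A : Set Λ),
      f A (e.symm ⟨v, gg⟩) = gg ⟨v.filter (· ∈ A), Finset.filter_subset _ _⟩ := by
    intro v gg A
    simp only [hf]
    erw [e.apply_symm_apply]
  -- injectivity of f
  have finj : Function.Injective f := by
    intro A B hAB
    by_contra hne
    have : ∃ α, (α ∈ A) ≠ (α ∈ B) := by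
      by_contra h
      push_neg at h
      exact hne (Set.ext fun α => iff_of_eq (h α))
    obtain ⟨α, hα⟩ := this
    obtain ⟨k₁, k₂, hk⟩ := exists_pair_ne K
    set gg : {t : Finset Λ // t ⊆ ({α} : Finset Λ)} → K :=
      fun t => if α ∈ t.1 then k₁ else k₂ with hgg
    have h1 := key {α} gg A
    have h2 := key {α} gg B
    rw [hAB] at h1
    rw [h1] at h2
    simp only [hgg, Finset.mem_filter, Finset.mem_singleton, true_and] at h2
    by_cases hA : α ∈ A
    · have hB : α ∉ B := by
        intro hB; exact hα (by simp [hA, hB])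
      rw [if_pos, if_neg] at h2
      · exact hk h2
      · simp [hB]
      · simp [hA]
    · have hB : α ∈ B := by
        by_contra hB; exact hα (by simp [hA, hB])
      rw [if_neg, if_pos] at h2
      · exact hk h2.symm
      · simp [hB]
      · simp [hA]
  -- The core realization lemma
  have core : ∀ (T : Set (Set Λ)), T ⊆ Set.range X → T.Finite →
      ∀ (s : Finset (Λ → K)), ↑s ⊆ Set.range f → ∀ j : (Λ → K) → K,
      ∃ t₀ ∈ ⋂₀ T, ∀ g ∈ s, g t₀ = j g := by
    intro T hTX hTfin s hsF j
    -- pick an index for each member of T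
    set u : Finset Λ := hTfin.toFinset.image
      (fun y => if h : ∃ a, X a = y then h.choose else Classical.arbitrary Λ) with hu
    -- pick the set for each g ∈ s
    have hA : ∀ g ∈ s, ∃ A : Set Λ, f A = g := fun g hg => hsF hg
    set A : (Λ → K) → Set Λ := fun g => if h : ∃ A : Set Λ, f A = g then h.choose else ∅
      with hAdef
    have hfA : ∀ g ∈ s, f (A g) = g := by
      intro g hg
      have h := hA g hg
      simp only [hAdef, dif_pos h]
      exact h.choose_spec
    have hAinj : ∀ g ∈ s, ∀ g' ∈ s, A g = A g' → g = g' := by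
      intro g hg g' hg' h
      rw [← hfA g hg, ← hfA g' hg', h]
    -- separators
    have hsep : ∀ p : (Λ → K) × (Λ → K), p.1 ∈ s → p.2 ∈ s → p.1 ≠ p.2 →
        ∃ α, (α ∈ A p.1) ≠ (α ∈ A p.2) := by
      intro p h1 h2 hne
      by_contra h
      push_neg at h
      exact hne (hAinj _ h1 _ h2 (Set.ext fun α => iff_of_eq (h α)))
    set sep : (Λ → K) × (Λ → K) → Λ := fun p =>
      if h : p.1 ∈ s ∧ p.2 ∈ s ∧ p.1 ≠ p.2 then
        (hsep p h.1 h.2.1 h.2.2).choose else Classical.arbitrary Λ with hsepdef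
    set v : Finset Λ := u ∪ (s ×ˢ s).image sep with hv
    -- distinct g's give distinct traces on v
    have htrace : ∀ g ∈ s, ∀ g' ∈ s, v.filter (· ∈ A g) = v.filter (· ∈ A g') → g = g' := by
      intro g hg g' hg' h
      by_contra hne
      have hmem : sep (g, g') ∈ v := by
        refine Finset.mem_union_right _ (Finset.mem_image.2 ⟨(g, g'), ?_, rfl⟩)
        exact Finset.mem_product.2 ⟨hg, hg'⟩
      have hspec : (sep (g, g') ∈ A g) ≠ (sep (g, g') ∈ A g') := by
        have hcond : (g, g').1 ∈ s ∧ (g, g').2 ∈ s ∧ (g, g').1 ≠ (g, g').2 := ⟨hg, hg', hne⟩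
        simp only [hsepdef, dif_pos hcond]
        exact (hsep (g, g') hg hg' hne).choose_spec
      have := Finset.ext_iff.1 h (sep (g, g'))
      simp only [Finset.mem_filter, hmem, true_and] at this
      exact hspec (propext this)
    -- the function on subsets of v, realizing the pattern
    set gg : {t : Finset Λ // t ⊆ v} → K := fun t =>
      if h : ∃ g, g ∈ s ∧ v.filter (· ∈ A g) = t.1 then j h.choose
      else Classical.arbitrary K with hggdef
    refine ⟨e.symm ⟨v, gg⟩, ?_, ?_⟩
    · -- in the intersection
      intro y hy
      have hex : ∃ a, X a = y := hTX hy
      have hXa : X hex.choose = y := hex.choose_spec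
      have hau : hex.choose ∈ u := by
        rw [hu]
        refine Finset.mem_image.2 ⟨y, hTfin.mem_toFinset.2 hy, ?_⟩
        rw [dif_pos hex]
      have hav : hex.choose ∈ v := Finset.mem_union_left _ hau
      rw [← hXa]
      show hex.choose ∈ (e (e.symm ⟨v, gg⟩)).1
      erw [e.apply_symm_apply]
      exact hav
    · -- the pattern is realized
      intro g hg
      have h1 := key v gg (A g)
      rw [hfA g hg] at h1
      rw [h1]
      simp only [hggdef]
      have hex : ∃ g', g' ∈ s ∧
          v.filter (· ∈ A g') = v.filter (· ∈ A g) := ⟨g, hg, rfl⟩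
      rw [dif_pos hex]
      exact congrArg j (htrace _ hex.choose_spec.1 _ hg hex.choose_spec.2)
  -- non-membership of pattern complements
  have hnotmem : ∀ (s : Finset (Λ → K)), ↑s ⊆ Set.range f → ∀ j : (Λ → K) → K,
      {t : Λ | ∀ g ∈ s, g t = j g}ᶜ ∉ D₀ := by
    intro s hs j hmem
    rw [hD₀, Filter.mem_generate_iff] at hmem
    obtain ⟨T, hT1, hT2, hT3⟩ := hmem
    obtain ⟨t₀, ht₀, hpat⟩ := core T hT1 hT2 s hs j
    exact hT3 ht₀ hpat
  refine ⟨D₀, ?_, ⟨X, ?_, ?_⟩, Set.range f, ?_, hnotmem⟩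
  · -- NeBot
    refine Filter.neBot_iff.2 ?_
    intro hbot
    have hemp : (∅ : Set Λ) ∈ D₀ := by rw [hbot]; exact Filter.mem_bot
    have hrw : {t : Λ | ∀ g ∈ (∅ : Finset (Λ → K)),
        g t = (fun _ => Classical.arbitrary K) g}ᶜ = (∅ : Set Λ) := by simp
    exact hnotmem ∅ (by simp) (fun _ => Classical.arbitrary K) (hrw ▸ hemp)
  · -- the regular family belongs to D₀
    intro a
    exact Filter.mem_generate_of_mem (Set.mem_range_self a)
  · -- regularity
    intro σ hσ
    ext t
    simp only [Set.mem_iInter, Set.mem_empty_iff_false, iff_false]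
    intro h
    have hsub : σ ⊆ ↑(e t).1 := fun a ha => h a ha
    exact hσ ((e t).1.finite_toSet.subset hsub)
  · -- cardinality
    rw [Cardinal.mk_range_eq f finj, Cardinal.mk_set]
end

section
/- (Keisler under GCH; Kunen in ZFC) For every infinite cardinal λ there exists an ultrafilter D on a set I with |I| = λ which is both regular and good. -/
open Classical

universe u

/-!
Kunen's construction. The set `I` of pairs `(s, e)` with `s ∈ [λ]^{<ω}` and
`e : 𝒫(s) → [λ]^{<ω}` has size `λ`, and the `2^λ` functions `f_A (s, e) = e (A ∩ s)`, `A ⊆ λ`, are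
independent modulo the filter generated by the regularising sets `{(s, e) | α ∈ s}`. A transfinite
construction of length `2^λ` enlarges this filter while a co-small part of the family stays
independent: deciding a subset of `I` uses up finitely many `f_A`, and refining a monotone `f`
uses up one `f_B`, through `g u = {x | u ⊆ f_B x ∧ x ∈ f (f_B x)}`. As `cf (2^λ) > λ`, every
monotone `f` into the limit ultrafilter is met by a stage after all its values have appeared.
-/

open Filter Set Cardinal

section Independence

variable {X ι Y : Type*}

/-- Kunen's independence of the subfamily `φ|G` of functions modulo the filter `F`. -/
def IndepMod (φ : ι → X → Y) (F : Filter X) (G : Set ι) : Prop :=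
  ∀ T : Finset ι, ↑T ⊆ G → ∀ w : ι → Y, ∃ᶠ x in F, ∀ A ∈ T, φ A x = w A

variable {φ : ι → X → Y} {F : Filter X} {G : Set ι}

theorem IndepMod.neBot [Nonempty Y] (h : IndepMod φ F G) : F.NeBot :=
  (frequently_true_iff_neBot F).1 <|
    (h ∅ (by simp) fun _ => Classical.arbitrary Y).mono fun _ _ => trivial

theorem IndepMod.iInf {J : Type*} [Nonempty J] {F : J → Filter X} {G : J → Set ι}
    (hF : Directed (· ≥ ·) F) (h : ∀ j, IndepMod φ (F j) (G j)) :
    IndepMod φ (⨅ j, F j) (⋂ j, G j) := by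
  intro T hT w
  refine frequently_iff.2 fun {S} hS => ?_
  obtain ⟨j, hj⟩ := (mem_iInf_of_directed hF S).1 hS
  exact frequently_iff.1 (h j T (hT.trans (iInter_subset G j)) w) hj

theorem IndepMod.inf_principal_pattern (h : IndepMod φ F G) {T : Finset ι} (hT : ↑T ⊆ G)
    (w : ι → Y) : IndepMod φ (F ⊓ 𝓟 {x | ∀ A ∈ T, φ A x = w A}) (G \ T) := by
  intro T' hT' w'
  rw [frequently_inf_principal]
  have hdisj : ∀ A ∈ T', A ∉ T := fun A hA => (hT' hA).2
  refine (h (T ∪ T') ?_ fun A => if A ∈ T then w A else w' A).mono fun x hx => ⟨?_, ?_⟩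
  · simpa using ⟨hT, fun A hA => (hT' hA).1⟩
  · intro A hA
    simpa [hA] using hx A (Finset.mem_union_left _ hA)
  · intro A hA
    simpa [hdisj A hA] using hx A (Finset.mem_union_right _ hA)

/-- Either `A` can be added to `F`, or some finite pattern of values forces `Aᶜ`. -/
theorem IndepMod.exists_mem_or_compl_mem (h : IndepMod φ F G) (A : Set X) :
    ∃ F' ≤ F, ∃ G' ⊆ G, (G \ G').Finite ∧ IndepMod φ F' G' ∧ (A ∈ F' ∨ Aᶜ ∈ F') := by
  by_cases hA : IndepMod φ (F ⊓ 𝓟 A) G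
  · exact ⟨_, inf_le_left, G, subset_rfl, by simp, hA,
      .inl (mem_inf_of_right (mem_principal_self A))⟩
  simp only [IndepMod, not_forall] at hA
  obtain ⟨T, hT, w, hTw⟩ := hA
  rw [not_frequently, eventually_inf_principal] at hTw
  refine ⟨_, inf_le_left, G \ T, sdiff_subset,
    T.finite_toSet.subset fun B hB => by_contra fun hBT => hB.2 ⟨hB.1, hBT⟩,
    h.inf_principal_pattern hT w, .inr ?_⟩
  rw [mem_inf_principal]
  filter_upwards [hTw] with x hx hxT hxA using hx hxA hxT

variable {κ : Type*}

def HasMultiplicativeRefinement (F : Filter X) (f : Finset κ → Set X) : Prop :=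
  ∃ g : Finset κ → Set X, (∀ u, g u ∈ F) ∧ (∀ u, g u ⊆ f u) ∧ ∀ u v, g u ∩ g v = g (u ∪ v)

theorem HasMultiplicativeRefinement.mono {F' : Filter X} {f : Finset κ → Set X}
    (h : HasMultiplicativeRefinement F f) (hF : F' ≤ F) : HasMultiplicativeRefinement F' f :=
  let ⟨g, hgF, hgf, hg⟩ := h
  ⟨g, fun u => hF (hgF u), hgf, hg⟩

theorem IndepMod.exists_hasMultiplicativeRefinement {φ : ι → X → Finset κ} (h : IndepMod φ F G)
    {B : ι} (hB : B ∈ G) {f : Finset κ → Set X} (hfF : ∀ u, f u ∈ F) (hf : Antitone f) :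
    ∃ F' ≤ F, IndepMod φ F' (G \ {B}) ∧ HasMultiplicativeRefinement F' f := by
  set g : Finset κ → Set X := fun u => {x | u ⊆ φ B x ∧ x ∈ f (φ B x)}
  have hg : Antitone g := fun u v huv x hx => ⟨huv.trans hx.1, hx.2⟩
  have hbasis := F.basis_sets.inf (hasBasis_iInf_principal hg.directed_ge)
  refine ⟨F ⊓ ⨅ u, 𝓟 (g u), inf_le_left, fun T hT w => ?_, g,
    fun u => mem_inf_of_right (mem_iInf_of_mem u (mem_principal_self _)),
    fun u x hx => hf hx.1 hx.2, fun u v => ?_⟩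
  · refine hbasis.frequently_iff.2 fun ⟨S, u⟩ ⟨hS, _⟩ => ?_
    have hBT : B ∉ T := fun hBT => (hT hBT).2 rfl
    have hBT' : ↑(insert B T) ⊆ G := by
      simpa [insert_subset_iff] using ⟨hB, fun A hA => (hT hA).1⟩
    obtain ⟨x, hx, hxS, hxf⟩ :=
      ((h _ hBT' (Function.update w B u)).and_eventually (inter_mem hS (hfF u))).exists
    have hxB : φ B x = u := by simpa using hx B (Finset.mem_insert_self B T)
    refine ⟨x, ⟨hxS, hxB.ge, hxB ▸ hxf⟩, fun A hA => ?_⟩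
    simpa [Function.update, ne_of_mem_of_not_mem hA hBT] using
      hx A (Finset.mem_insert_of_mem hA)
  · ext x
    simp only [g, mem_inter_iff, mem_ofPred_eq, Finset.union_subset_iff]
    tauto

end Independence

section Construction

variable {X : Type*} {κ ι : Type u} (φ : ι → X → Finset κ)

/-- A stage of the construction is a filter together with the part of the family that is still
independent modulo it. -/
def IsNextStage (A : Set X) (f : Finset κ → Set X) (p q : Filter X × Set ι) : Prop :=
  q ≤ p ∧ (p.2 \ q.2).Finite ∧ IndepMod φ q.1 q.2 ∧ (A ∈ q.1 ∨ Aᶜ ∈ q.1) ∧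
    ((∀ u, f u ∈ p.1) → Antitone f → HasMultiplicativeRefinement q.1 f)

variable {φ}

theorem IndepMod.exists_isNextStage {p : Filter X × Set ι} (hp : IndepMod φ p.1 p.2)
    (hinf : p.2.Infinite) (A : Set X) (f : Finset κ → Set X) : ∃ q, IsNextStage φ A f p q := by
  obtain ⟨F₁, hF₁, G₁, hG₁, hfin₁, h₁, hA⟩ := hp.exists_mem_or_compl_mem A
  have hinf₁ : G₁.Infinite :=
    (hinf.sdiff hfin₁).mono fun x hx => by_contra fun hx₁ => hx.2 ⟨hx.1, hx₁⟩
  by_cases hf : (∀ u, f u ∈ p.1) ∧ Antitone f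
  · obtain ⟨B, hB⟩ := hinf₁.nonempty
    obtain ⟨F₂, hF₂, h₂, hg⟩ :=
      h₁.exists_hasMultiplicativeRefinement hB (fun u => hF₁ (hf.1 u)) hf.2
    refine ⟨(F₂, G₁ \ {B}), ⟨hF₂.trans hF₁, sdiff_subset.trans hG₁⟩, ?_, h₂,
      hA.imp (hF₂ ·) (hF₂ ·), fun _ _ => hg⟩
    rw [sdiff_sdiff_right]
    exact hfin₁.union ((finite_singleton B).inter_of_right _)
  · exact ⟨(F₁, G₁), ⟨hF₁, hG₁⟩, hfin₁, h₁, hA, fun hfF hfa => absurd ⟨hfF, hfa⟩ hf⟩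

variable (φ)

noncomputable def nextStage (A : Set X) (f : Finset κ → Set X) (p : Filter X × Set ι) :
    Filter X × Set ι :=
  if h : ∃ q, IsNextStage φ A f p q then h.choose else p

variable {φ}

theorem nextStage_le_and_finite (A : Set X) (f : Finset κ → Set X) (p : Filter X × Set ι) :
    nextStage φ A f p ≤ p ∧ (p.2 \ (nextStage φ A f p).2).Finite := by
  unfold nextStage
  split_ifs with h
  · exact ⟨h.choose_spec.1, h.choose_spec.2.1⟩
  · simp

theorem IndepMod.isNextStage_nextStage {p : Filter X × Set ι} (hp : IndepMod φ p.1 p.2)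
    (hinf : p.2.Infinite) (A : Set X) (f : Finset κ → Set X) :
    IsNextStage φ A f p (nextStage φ A f p) := by
  have h := hp.exists_isNextStage hinf A f
  rw [nextStage, dif_pos h]
  exact h.choose_spec

variable {W : Type u} [LinearOrder W] [WellFoundedLT W]
variable (φ) (F₀ : Filter X) (task : W → Set X × (Finset κ → Set X))

noncomputable def stage : W → Filter X × Set ι :=
  WellFoundedLT.fix fun w stageOf =>
    nextStage φ (task w).1 (task w).2 ((F₀, univ) ⊓ ⨅ v : Iio w, stageOf v v.2)

noncomputable def stageBelow (w : W) : Filter X × Set ι :=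
  (F₀, univ) ⊓ ⨅ v : Iio w, stage φ F₀ task v

variable {φ F₀ task}

theorem stage_eq (w : W) :
    stage φ F₀ task w = nextStage φ (task w).1 (task w).2 (stageBelow φ F₀ task w) :=
  WellFoundedLT.fix_eq _ w

theorem stage_le_stageBelow (w : W) : stage φ F₀ task w ≤ stageBelow φ F₀ task w := by
  rw [stage_eq]
  exact (nextStage_le_and_finite _ _ _).1

theorem finite_stageBelow_diff_stage (w : W) :
    ((stageBelow φ F₀ task w).2 \ (stage φ F₀ task w).2).Finite := by
  rw [stage_eq]
  exact (nextStage_le_and_finite _ _ _).2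

theorem stageBelow_le_stage {v w : W} (h : v < w) :
    stageBelow φ F₀ task w ≤ stage φ F₀ task v :=
  inf_le_right.trans (iInf_le _ (⟨v, h⟩ : Iio w))

theorem stage_antitone : Antitone (stage φ F₀ task) := by
  intro v w h
  rcases h.eq_or_lt with rfl | h
  · exact le_rfl
  · exact (stage_le_stageBelow w).trans (stageBelow_le_stage h)

theorem antitone_stage_fst : Antitone fun w => (stage φ F₀ task w).1 :=
  fun _ _ h => (stage_antitone h).1

theorem mem_stageBelow_snd {w : W} {B : ι} :
    B ∈ (stageBelow φ F₀ task w).2 ↔ ∀ v < w, B ∈ (stage φ F₀ task v).2 := by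
  simp [stageBelow, Prod.snd_iInf]

/-- A member of the family that is no longer free before `w` was used up at the first stage
that does not contain it. -/
theorem compl_stageBelow_subset (w : W) : (stageBelow φ F₀ task w).2ᶜ ⊆
    ⋃ v : Iio w, (stageBelow φ F₀ task v).2 \ (stage φ F₀ task v).2 := by
  intro B hB
  simp only [mem_compl_iff, mem_stageBelow_snd, not_forall] at hB
  obtain ⟨v, ⟨hvw, hBv⟩, hmin⟩ :=
    wellFounded_lt.has_min {v | v < w ∧ B ∉ (stage φ F₀ task v).2}
      (let ⟨v, hv, hB⟩ := hB; ⟨v, hv, hB⟩)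
  refine mem_iUnion.2 ⟨⟨v, hvw⟩, mem_stageBelow_snd.2 fun y hy => ?_, hBv⟩
  by_contra hBy
  exact hmin y ⟨hy.trans hvw, hBy⟩ hy

theorem mk_compl_stageBelow_lt (hι : ℵ₀ < #ι) {w : W} (hw : #(Iio w) < #ι) :
    #((stageBelow φ F₀ task w).2ᶜ : Set ι) < #ι :=
  calc #((stageBelow φ F₀ task w).2ᶜ : Set ι)
      ≤ #(⋃ v : Iio w, (stageBelow φ F₀ task v).2 \ (stage φ F₀ task v).2) :=
        mk_le_mk_of_subset (compl_stageBelow_subset w)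
    _ ≤ #(Iio w) * ℵ₀ :=
        (mk_iUnion_le _).trans (mul_le_mul' le_rfl
          (ciSup_le' fun v => (finite_stageBelow_diff_stage v.1).lt_aleph0.le))
    _ < #ι := mul_lt_of_lt hι.le hw hι

theorem infinite_stageBelow (hι : ℵ₀ < #ι) {w : W} (hw : #(Iio w) < #ι) :
    (stageBelow φ F₀ task w).2.Infinite := by
  have : Infinite ι := infinite_iff.2 hι.le
  have h := mk_compl_of_infinite _
    (mk_compl_stageBelow_lt (φ := φ) (F₀ := F₀) (task := task) hι hw)
  rw [compl_compl] at h
  exact infinite_coe_iff.1 (infinite_iff.2 (h ▸ hι.le))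

theorem indepMod_stageBelow (h₀ : IndepMod φ F₀ univ) {w : W}
    (h : ∀ v < w, IndepMod φ (stage φ F₀ task v).1 (stage φ F₀ task v).2) :
    IndepMod φ (stageBelow φ F₀ task w).1 (stageBelow φ F₀ task w).2 := by
  rcases isEmpty_or_nonempty (Iio w) with hw | hw
  · simpa [stageBelow] using h₀
  have hle : ⨅ v : Iio w, stage φ F₀ task v ≤ (F₀, Set.univ) :=
    (iInf_le _ hw.some).trans ((stage_le_stageBelow _).trans inf_le_left)
  rw [stageBelow, inf_eq_right.2 hle, Prod.fst_iInf, Prod.snd_iInf]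
  exact IndepMod.iInf (antitone_stage_fst.comp_monotone (Subtype.mono_coe _)).directed_ge
    fun v => h v v.2

theorem isNextStage_stage (h₀ : IndepMod φ F₀ univ) (hι : ℵ₀ < #ι)
    (hW : ∀ w : W, #(Iio w) < #ι) (w : W) :
    IsNextStage φ (task w).1 (task w).2 (stageBelow φ F₀ task w) (stage φ F₀ task w) := by
  induction w using WellFoundedLT.induction with
  | _ w ih =>
    rw [stage_eq]
    exact (indepMod_stageBelow h₀ fun v hv => (ih v hv).2.2.1).isNextStage_nextStage
      (infinite_stageBelow hι (hW w)) _ _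

variable (φ F₀ task)

noncomputable def limitFilter : Filter X := ⨅ w, (stage φ F₀ task w).1

variable {φ F₀ task}

theorem limitFilter_le_stage (w : W) : limitFilter φ F₀ task ≤ (stage φ F₀ task w).1 :=
  iInf_le _ w

theorem limitFilter_le [Nonempty W] : limitFilter φ F₀ task ≤ F₀ :=
  let ⟨w⟩ := ‹Nonempty W›
  (limitFilter_le_stage w).trans ((stage_le_stageBelow w).1.trans inf_le_left)

theorem limitFilter_neBot [Nonempty W] (h₀ : IndepMod φ F₀ univ) (hι : ℵ₀ < #ι)
    (hW : ∀ w : W, #(Iio w) < #ι) : (limitFilter φ F₀ task).NeBot :=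
  iInf_neBot_of_directed' antitone_stage_fst.directed_ge
    fun w => (isNextStage_stage h₀ hι hW w).2.2.1.neBot

theorem mem_or_compl_mem_limitFilter (h₀ : IndepMod φ F₀ univ) (hι : ℵ₀ < #ι)
    (hW : ∀ w : W, #(Iio w) < #ι) {A : Set X} (hA : ∃ w, (task w).1 = A) :
    A ∈ limitFilter φ F₀ task ∨ Aᶜ ∈ limitFilter φ F₀ task := by
  obtain ⟨w, rfl⟩ := hA
  exact (isNextStage_stage h₀ hι hW w).2.2.2.1.imp (limitFilter_le_stage w ·)
    (limitFilter_le_stage w ·)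

/-- Since `cof W` exceeds the number of indices `u`, all `f u` are already in some stage `w₀`;
a later stage whose task is `f` then refines it. -/
theorem hasMultiplicativeRefinement_limitFilter [Nonempty W] (h₀ : IndepMod φ F₀ univ)
    (hι : ℵ₀ < #ι) (hW : ∀ w : W, #(Iio w) < #ι) (hcof : #(Finset κ) < Order.cof W)
    {f : Finset κ → Set X} (hf_task : ∀ w₀, ∃ w, w₀ ≤ w ∧ (task w).2 = f)
    (hfL : ∀ u, f u ∈ limitFilter φ F₀ task) (hf : Antitone f) :
    HasMultiplicativeRefinement (limitFilter φ F₀ task) f := by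
  choose w hw using fun u => (mem_iInf_of_directed antitone_stage_fst.directed_ge _).1 (hfL u)
  obtain ⟨w₀, hw₀⟩ := not_isCofinal_iff.1 fun h =>
    ((Order.cof_le h).trans mk_range_le).not_gt hcof
  obtain ⟨w', hw₀w', rfl⟩ := hf_task w₀
  refine ((isNextStage_stage h₀ hι hW w').2.2.2.2 (fun u => ?_) hf).mono
    (limitFilter_le_stage w')
  exact (stageBelow_le_stage ((hw₀ _ ⟨u, rfl⟩).trans_le hw₀w')).1 (hw u)

end Construction

theorem exists_unbounded_enumeration {α : Type u} [Nonempty α] {c : Cardinal.{u}}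
    (hc : ℵ₀ ≤ c) (hα : #α ≤ c) : ∃ e : c.ord.ToType → α, ∀ a w₀, ∃ w, w₀ ≤ w ∧ e w = a := by
  obtain ⟨E⟩ : Nonempty (c.ord.ToType ≃ α × c.ord.ToType) := by
    rw [← Cardinal.eq, mk_prod, lift_id, lift_id, mk_ord_toType,
      Cardinal.mul_eq_right hc hα (mk_ne_zero α)]
  refine ⟨fun w => (E w).1, fun a w₀ => ?_⟩
  by_contra! h
  have hinj : Function.Injective fun w : c.ord.ToType =>
      (⟨E.symm (a, w), not_le.1 fun hle => h _ hle (by simp)⟩ : Iio w₀) := fun x y hxy => by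
    simpa using congrArg (fun v : Iio w₀ => (E v).2) hxy
  exact (mk_Iio_lt w₀ (by simp)).not_ge (mk_le_of_injective hinj)

theorem IndepMod.exists_good_ultrafilter_le {X κ ι : Type u} {φ : ι → X → Finset κ}
    {F₀ : Filter X} (h₀ : IndepMod φ F₀ univ) (hι : ℵ₀ < #ι)
    (htasks : #(Set X × (Finset κ → Set X)) ≤ #ι) (hκ : #(Finset κ) < (#ι).ord.cof) :
    ∃ D : Ultrafilter X, ↑D ≤ F₀ ∧ ∀ f : Finset κ → Set X,
      (∀ u, f u ∈ D) → Antitone f → HasMultiplicativeRefinement ↑D f := by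
  obtain ⟨task, htask⟩ := exists_unbounded_enumeration hι.le htasks
  have hW (w : (#ι).ord.ToType) : #(Iio w) < #ι :=
    (mk_Iio_lt w (by simp)).trans_eq (mk_ord_toType _)
  have : Nonempty (#ι).ord.ToType := by
    rw [← mk_ne_zero_iff, mk_ord_toType]
    exact (aleph0_pos.trans hι).ne'
  have := limitFilter_neBot (φ := φ) (task := task) h₀ hι hW
  have hdec (A : Set X) := mem_or_compl_mem_limitFilter (task := task) h₀ hι hW
    (let ⟨w, _, hw⟩ := htask (A, fun _ => ∅) (Classical.arbitrary _); ⟨w, by rw [hw]⟩)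
  refine ⟨.ofComplNotMemIff (limitFilter φ F₀ task) fun A =>
    ⟨(hdec A).resolve_right, compl_notMem⟩, limitFilter_le, fun f hf hanti => ?_⟩
  refine hasMultiplicativeRefinement_limitFilter h₀ hι hW ((Ordinal.cof_toType _).symm ▸ hκ)
    (fun w₀ => ?_) hf hanti
  obtain ⟨w, hw, htw⟩ := htask (∅, f) w₀
  exact ⟨w, hw, by rw [htw]⟩

theorem exists_finset_superset_injOn_preimage_val {α : Type*} (T : Finset (Set α))
    (u : Finset α) :
    ∃ s : Finset α, u ⊆ s ∧ InjOn (fun A : Set α => ((↑) : s → α) ⁻¹' A) T := by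
  have hsep (A B : Set α) : ∃ t : Finset α, (∀ x ∈ t, (x ∈ A ↔ x ∈ B)) → A = B := by
    by_cases h : A = B
    · exact ⟨∅, fun _ => h⟩
    · obtain ⟨x, hx⟩ : ∃ x, ¬(x ∈ A ↔ x ∈ B) := by
        by_contra! hc
        exact h (Set.ext hc)
      exact ⟨{x}, fun hAB => absurd (hAB x (Finset.mem_singleton_self x)) hx⟩
  choose sep hsep using hsep
  refine ⟨u ∪ T.biUnion fun A => T.biUnion (sep A), Finset.subset_union_left,
    fun A hA B hB hAB => hsep A B fun x hx => ?_⟩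
  have hxs : x ∈ u ∪ T.biUnion fun A => T.biUnion (sep A) :=
    Finset.mem_union_right _ (Finset.mem_biUnion.2 ⟨A, hA, Finset.mem_biUnion.2 ⟨B, hB, hx⟩⟩)
  exact Set.ext_iff.1 hAB ⟨x, hxs⟩

theorem setOf_mem_mem_comap_atTop {I α : Type*} (p : I → Finset α) (a : α) :
    {i | a ∈ p i} ∈ comap p atTop :=
  mem_comap.2 ⟨_, eventually_ge_atTop ({a} : Finset α),
    fun _ hi => Finset.singleton_subset_iff.1 hi⟩

theorem biInter_setOf_mem_eq_empty {I α : Type*} (p : I → Finset α) {σ : Set α}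
    (hσ : σ.Infinite) : ⋂ a ∈ σ, {i | a ∈ p i} = ∅ :=
  eq_empty_of_forall_notMem fun i hi =>
    hσ ((p i).finite_toSet.subset fun a ha => mem_iInter₂.1 hi a ha)

section Kunen

variable (Λ : Type u)

abbrev KunenIndex : Type u := Σ s : Finset Λ, (Set s → Finset Λ)

variable {Λ}

def evalTrace (A : Set Λ) (i : KunenIndex Λ) : Finset Λ := i.2 ((↑) ⁻¹' A)

theorem indepMod_evalTrace :
    IndepMod evalTrace (comap Sigma.fst atTop : Filter (KunenIndex Λ)) univ := by
  intro T _ w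
  rw [frequently_comap, frequently_atTop]
  intro u
  obtain ⟨s, hus, hinj⟩ := exists_finset_superset_injOn_preimage_val T u
  let trace : T → Set s := fun A => (↑) ⁻¹' A.1
  have htrace : Function.Injective trace := fun A B h => Subtype.ext (hinj A.2 B.2 h)
  exact ⟨s, hus, ⟨s, Function.extend trace (fun A => w A) fun _ => ∅⟩, rfl,
    fun A hA => htrace.extend_apply (fun A : T => w A) (fun _ => ∅) ⟨A, hA⟩⟩

variable (Λ) [Infinite Λ]

theorem mk_kunenIndex : #(KunenIndex Λ) = #Λ := by
  have hpow (s : Finset Λ) : #(Set s → Finset Λ) = #Λ := by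
    rw [mk_arrow, lift_id, lift_id, mk_finset_of_infinite, mk_fintype (Set s), power_natCast]
    exact power_nat_eq (aleph0_le_mk Λ) Fintype.card_pos
  rw [mk_sigma, funext hpow, sum_const', mk_finset_of_infinite,
    mul_eq_self (aleph0_le_mk Λ)]

theorem mk_tasks_le : #(Set (KunenIndex Λ) × (Finset Λ → Set (KunenIndex Λ))) ≤ #(Set Λ) := by
  rw [mk_prod, lift_id, lift_id, mk_arrow, lift_id, lift_id, mk_set, mk_set, mk_kunenIndex,
    mk_finset_of_infinite, ← power_mul, mul_eq_self (aleph0_le_mk Λ), ← power_add,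
    add_eq_self (aleph0_le_mk Λ)]

end Kunen

/-- (Keisler under GCH; Kunen in ZFC) For every infinite cardinal `λ` (realized as an
infinite type `Λ`) there exists an ultrafilter `D` on a set `I` with `|I| = λ` which is
both regular (there is a family `{X_α : α < λ} ⊆ D` every infinite subfamily of which
has empty intersection) and good (every monotone `f : [λ]^{<ℵ₀} → D` has a
multiplicative refinement `g : [λ]^{<ℵ₀} → D` with `g u ⊆ f u` and
`g u ∩ g v = g (u ∪ v)`). -/
theorem exists_good_regular_ultrafilter (Λ : Type u) [Infinite Λ] :
    ∃ (I : Type u) (D : Ultrafilter I),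
      Cardinal.mk I = Cardinal.mk Λ ∧
      (∃ X : Λ → Set I, (∀ a : Λ, X a ∈ D) ∧
        ∀ σ : Set Λ, σ.Infinite → ⋂ a ∈ σ, X a = ∅) ∧
      (∀ f : Finset Λ → Set I, (∀ u, f u ∈ D) → (∀ u v : Finset Λ, u ⊆ v → f v ⊆ f u) →
        ∃ g : Finset Λ → Set I,
          (∀ u, g u ∈ D) ∧ (∀ u, g u ⊆ f u) ∧
          ∀ u v : Finset Λ, g u ∩ g v = g (u ∪ v)) := by
  have hΛ := aleph0_le_mk Λ
  obtain ⟨D, hD, hgood⟩ := indepMod_evalTrace.exists_good_ultrafilter_le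
    (by rw [mk_set]; exact hΛ.trans_lt (cantor _)) (mk_tasks_le Λ)
    (by rw [mk_finset_of_infinite, mk_set]; exact lt_cof_ord_power hΛ one_lt_two)
  exact ⟨KunenIndex Λ, D, mk_kunenIndex Λ, ⟨fun a => {i | a ∈ i.1},
    fun a => hD (setOf_mem_mem_comap_atTop Sigma.fst a),
    fun _ => biInter_setOf_mem_eq_empty Sigma.fst⟩, hgood⟩
end

section
/- (Keisler) Let L be a countable first-order language, M an L-structure, and D a regular good ultrafilter on a set I with |I| = λ ≥ ℵ₀. Then the ultrapower N = M^I/D is λ⁺-saturated: for every set p of at most λ L-formulas in one free variable with parameters from N such that every finite subset of p is realized by some element of N, there is an element of N realizing every formula of p simultaneously. -/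
universe u v w

open FirstOrder Classical

/-- (Keisler) Let `L` be a countable language, `M` an `L`-structure, and `D` a regular
good ultrafilter on an infinite set `I` of cardinality `λ` (regularity and goodness
indexed by `I` itself, which has cardinality `λ`).  Then the ultrapower `N = M^I/D` is
`λ⁺`-saturated: every type `p` of at most `λ` formulas in one free variable with
parameters from `N` (here presented as a family of formulas indexed by `I`, each with
its parameter places filled from `N`), all of whose finite subsets are realized in `N`,
is realized in `N`. -/
theorem good_regular_ultrapower_saturated
    (L : FirstOrder.Language.{v, w}) (hL : L.card ≤ Cardinal.aleph0)
    (M : Type w) [L.Structure M]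
    (I : Type u) [Infinite I] (D : Ultrafilter I)
    (X : I → Set I) (hX : ∀ a : I, X a ∈ D)
    (hreg : ∀ σ : Set I, σ.Infinite → ⋂ a ∈ σ, X a = ∅)
    (hgood : ∀ f : Finset I → Set I, (∀ u, f u ∈ D) → (∀ u v : Finset I, u ⊆ v → f v ⊆ f u) →
      ∃ g : Finset I → Set I,
        (∀ u, g u ∈ D) ∧ (∀ u, g u ⊆ f u) ∧
        ∀ u v : Finset I, g u ∩ g v = g (u ∪ v))
    (φ : I → L.Formula (ℕ ⊕ Unit))
    (a : I → ℕ → (↑D : Filter I).Product (fun _ : I => M))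
    (hfin : ∀ s : Finset I, ∃ x : (↑D : Filter I).Product (fun _ : I => M),
      ∀ i ∈ s, (φ i).Realize (Sum.elim (a i) (fun _ => x))) :
    ∃ x : (↑D : Filter I).Product (fun _ : I => M),
      ∀ i : I, (φ i).Realize (Sum.elim (a i) (fun _ => x)) := by
  classical
  haveI : Nonempty I := inferInstance
  obtain ⟨x0, -⟩ := hfin ∅
  haveI hM : Nonempty M := ⟨x0.out (Classical.arbitrary I)⟩
  -- representatives of the parameters
  set ahat : I → ℕ → I → M := fun i n => (a i n).out with hahat
  -- Łoś-style transfer lemma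
  have key : ∀ (i : I) (y' : I → M),
      (φ i).Realize (Sum.elim (a i)
          (fun _ => ((y' : (↑D : Filter I).Product fun _ : I => M)))) ↔
        {t | (φ i).Realize (Sum.elim (fun n => ahat i n t) (fun _ => y' t))} ∈
          (↑D : Filter I) := by
    intro i y'
    letI : Setoid ((a : I) → (fun _ : I => M) a) := (↑D : Filter I).productSetoid fun _ : I => M
    have h1 := Language.Ultraproduct.realize_formula_cast (u := D) (φ i)
        (Sum.elim (fun n => ahat i n) (fun _ => y'))
    have e1 : (fun k : ℕ ⊕ Unit => (Quotient.mk' (Sum.elim (fun n => ahat i n)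
            (fun _ : Unit => y') k) : (↑D : Filter I).Product fun _ : I => M))
        = Sum.elim (a i) (fun _ : Unit =>
            (Quotient.mk' y' : (↑D : Filter I).Product fun _ : I => M)) := by
      funext k
      cases k with
      | inl n => exact Quotient.out_eq _
      | inr _ => rfl
    have e2 : ∀ t : I, (fun k : ℕ ⊕ Unit => Sum.elim (fun n => ahat i n) (fun _ : Unit => y') k t)
        = Sum.elim (fun n => ahat i n t) (fun _ : Unit => y' t) := by
      intro t; funext k; cases k <;> rfl
    rw [e1] at h1
    have hset : {x | (φ i).Realize fun k : ℕ ⊕ Unit =>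
          Sum.elim (fun n => ahat i n) (fun _ : Unit => y') k x}
        = {t | (φ i).Realize (Sum.elim (fun n => ahat i n t) (fun _ : Unit => y' t))} := by
      ext t
      simp only [Set.mem_setOf_eq]
      rw [e2 t]
    exact h1.trans (by rw [Filter.eventually_iff, hset])
  -- the monotone function
  set f : Finset I → Set I := fun u =>
    {t | ∃ m : M, ∀ i ∈ u, (φ i).Realize (Sum.elim (fun n => ahat i n t) (fun _ => m))}
      ∩ ⋂ i ∈ u, X i with hf
  have hfD : ∀ u, f u ∈ D := by
    intro u
    refine Filter.inter_mem ?_ ((Filter.biInter_finset_mem u).2 fun i _ => hX i)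
    obtain ⟨x, hx⟩ := hfin u
    have hxe : ((x.out : I → M) : (↑D : Filter I).Product fun _ : I => M) = x :=
      Quotient.out_eq _
    have hx' : ∀ i ∈ u,
        {t | (φ i).Realize (Sum.elim (fun n => ahat i n t) (fun _ => x.out t))} ∈
          (↑D : Filter I) := by
      intro i hi
      exact (key i x.out).1 (by rw [hxe]; exact hx i hi)
    have hbig : (⋂ i ∈ u,
        {t | (φ i).Realize (Sum.elim (fun n => ahat i n t) (fun _ => x.out t))}) ∈
          (↑D : Filter I) := (Filter.biInter_finset_mem u).2 hx'
    refine Filter.mem_of_superset hbig fun t ht => ?_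
    exact ⟨x.out t, fun i hi => Set.mem_iInter₂.1 ht i hi⟩
  have hmono : ∀ u v : Finset I, u ⊆ v → f v ⊆ f u := by
    intro u v huv t ht
    refine ⟨ht.1.imp fun m hm i hi => hm i (huv hi), ?_⟩
    exact Set.mem_iInter₂.2 fun i hi => Set.mem_iInter₂.1 ht.2 i (huv hi)
  obtain ⟨g, hgD, hgf, hmul⟩ := hgood f hfD hmono
  -- g {i} ⊆ X i
  have hgX : ∀ i : I, g {i} ⊆ X i := by
    intro i t ht
    have := (hgf {i} ht).2
    simpa using this
  -- finiteness of the trace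
  have hWfin : ∀ t : I, {i : I | t ∈ g {i}}.Finite := by
    intro t
    by_contra h
    have hsub : {i : I | t ∈ g {i}} ⊆ {i : I | t ∈ X i} := fun i hi => hgX i hi
    have hinf : {i : I | t ∈ X i}.Infinite := Set.Infinite.mono hsub h
    have h0 := hreg _ hinf
    have h1 : t ∈ ⋂ a ∈ {i : I | t ∈ X i}, X a := Set.mem_iInter₂.2 fun i hi => hi
    rw [h0] at h1
    exact h1
  set W : I → Finset I := fun t => (hWfin t).toFinset with hW
  have hmemW : ∀ t i, i ∈ W t ↔ t ∈ g {i} := by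
    intro t i; simp [hW, Set.Finite.mem_toFinset]
  -- multiplicativity gives t ∈ g (W t) when nonempty
  have hgen : ∀ (t : I) (u : Finset I), u.Nonempty → (∀ i ∈ u, t ∈ g {i}) → t ∈ g u := by
    intro t u
    induction u using Finset.induction_on with
    | empty => intro h; exact absurd h (by simp)
    | @insert i u hi ih =>
      intro _ hall
      rcases u.eq_empty_or_nonempty with rfl | hne
      · simpa using hall i (by simp)
      · have h1 : t ∈ g {i} := hall i (by simp)
        have h2 : t ∈ g u := ih hne fun j hj => hall j (by simp [hj])
        have := hmul {i} u
        have h3 : t ∈ g ({i} ∪ u) := this ▸ ⟨h1, h2⟩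
        rwa [show ({i} ∪ u : Finset I) = insert i u by ext; simp] at h3
  have hEx : ∀ t : I, ∃ m : M, ∀ i ∈ W t,
      (φ i).Realize (Sum.elim (fun n => ahat i n t) (fun _ => m)) := by
    intro t
    rcases (W t).eq_empty_or_nonempty with he | hne
    · exact ⟨Classical.arbitrary M, fun i hi => absurd hi (by rw [he]; simp)⟩
    · have h1 : t ∈ g (W t) := hgen t (W t) hne fun i hi => (hmemW t i).1 hi
      exact (hgf (W t) h1).1
  set b : I → M := fun t => (hEx t).choose with hb
  refine ⟨(b : (↑D : Filter I).Product fun _ : I => M), fun i => ?_⟩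
  refine (key i b).2 ?_
  refine Filter.mem_of_superset (hgD {i}) fun t ht => ?_
  exact (hEx t).choose_spec i ((hmemW t i).2 ht)
end

section
/- Let D be a regular good ultrafilter on a set I with |I| = λ. Then D is flexible: for every function n : I → ℕ such that { t ∈ I : n(t) ≥ k } ∈ D for every k ∈ ℕ (i.e., the class of n is nonstandard in ℕ^I/D), there is a regularizing family {X_α : α < λ} ⊆ D below n, meaning that for every t ∈ I the set { α < λ : t ∈ X_α } has at most n(t) elements, and for every infinite σ ⊆ λ the intersection ⋂_{α ∈ σ} X_α is empty. -/
universe u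

open Classical

/-- Let `D` be a regular good ultrafilter on an infinite set `I` of cardinality `λ`
(regularity and goodness indexed by `I` itself).  Then `D` is flexible: for every
`n : I → ℕ` whose class in `ℕ^I/D` is nonstandard (i.e. `{ t : n t ≥ k } ∈ D` for every
`k`), there is a regularizing family `{X_α : α < λ} ⊆ D` below `n`, meaning that for
every `t ∈ I` the set `{ α : t ∈ X_α }` has at most `n t` elements, and every infinite
subfamily has empty intersection. -/
theorem good_regular_implies_flexible
    {I : Type u} [Infinite I] (D : Ultrafilter I)
    (X : I → Set I) (hX : ∀ a : I, X a ∈ D)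
    (hreg : ∀ σ : Set I, σ.Infinite → ⋂ a ∈ σ, X a = ∅)
    (hgood : ∀ f : Finset I → Set I, (∀ u, f u ∈ D) → (∀ u v : Finset I, u ⊆ v → f v ⊆ f u) →
      ∃ g : Finset I → Set I,
        (∀ u, g u ∈ D) ∧ (∀ u, g u ⊆ f u) ∧
        ∀ u v : Finset I, g u ∩ g v = g (u ∪ v))
    (n : I → ℕ) (hn : ∀ k : ℕ, { t : I | k ≤ n t } ∈ D) :
    ∃ Y : I → Set I,
      (∀ a : I, Y a ∈ D) ∧
      (∀ t : I, Cardinal.mk { a : I | t ∈ Y a } ≤ (n t : Cardinal.{u})) ∧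
      ∀ σ : Set I, σ.Infinite → ⋂ a ∈ σ, Y a = ∅ := by
  set f : Finset I → Set I := fun u => { t : I | u.card ≤ n t } ∩ ⋂ a ∈ u, X a with hf
  have hfD : ∀ u, f u ∈ D := by
    intro u
    refine Filter.inter_mem (hn u.card) ?_
    have : (⋂ a ∈ u, X a) ∈ D := by
      classical
      induction u using Finset.induction with
      | empty =>
          have he : (⋂ a ∈ (∅ : Finset I), X a) = Set.univ := by simp
          rw [he]; exact Filter.univ_mem
      | insert _ _ ha ih =>
          rw [Finset.set_biInter_insert]
          exact Filter.inter_mem (hX _) ih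
    exact this
  have hfmono : ∀ u v : Finset I, u ⊆ v → f v ⊆ f u := by
    intro u v huv t ht
    obtain ⟨h1, h2⟩ := ht
    refine ⟨le_trans (Finset.card_le_card huv) h1, ?_⟩
    simp only [Set.mem_iInter] at h2 ⊢
    exact fun a ha => h2 a (huv ha)
  obtain ⟨g, hgD, hgf, hgmul⟩ := hgood f hfD hfmono
  refine ⟨fun a => g {a}, fun a => hgD _, ?_, ?_⟩
  · -- counting
    intro t
    set S : Set I := { a : I | t ∈ g {a} } with hS
    -- key: for nonempty finset u ⊆ S, t ∈ g u
    have key : ∀ u : Finset I, u.Nonempty → ↑u ⊆ S → t ∈ g u := by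
      intro u hu
      induction hu using Finset.Nonempty.cons_induction with
      | singleton a => intro h; exact h (by simp)
      | cons a u ha hu ih =>
          intro h
          have h1 : t ∈ g {a} := h (by simp)
          have h2 : t ∈ g u := ih fun x hx => h (by simp [hx])
          have : t ∈ g {a} ∩ g u := ⟨h1, h2⟩
          rw [hgmul] at this
          have : ({a} ∪ u : Finset I) = Finset.cons a u ha := by
            ext x; simp [Finset.mem_cons, or_comm]
          rwa [← this]
    have hcard : ∀ u : Finset I, ↑u ⊆ S → u.card ≤ n t := by
      intro u hu
      rcases u.eq_empty_or_nonempty with rfl | hne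
      · simp
      · exact ((hgf u) (key u hne hu)).1
    have hSfin : S.Finite := by
      by_contra hinf
      have hinf' : S.Infinite := hinf
      obtain ⟨u, hu, hcardu⟩ := hinf'.exists_subset_card_eq (n t + 1)
      have := hcard u hu
      omega
    calc Cardinal.mk S = (hSfin.toFinset.card : Cardinal.{u}) := by
            rw [← Cardinal.mk_coe_finset]
            exact Cardinal.mk_congr (Equiv.setCongr (hSfin.coe_toFinset).symm)
      _ ≤ (n t : Cardinal.{u}) := by
            exact_mod_cast hcard hSfin.toFinset (by simp)
  · intro σ hσ
    have : (⋂ a ∈ σ, g {a}) ⊆ ⋂ a ∈ σ, X a := by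
      refine Set.iInter₂_mono fun a _ => ?_
      intro t ht
      have := (hgf {a}) ht
      have h2 := this.2
      simp only [Finset.mem_singleton, Set.mem_iInter] at h2
      exact h2 a rfl
    rw [← Set.subset_empty_iff]
    calc (⋂ a ∈ σ, g {a}) ⊆ ⋂ a ∈ σ, X a := this
      _ = ∅ := hreg σ hσ
end
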